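/- arXiv:1408.0651 — 6 statements merged into one kernel-verified Lean document; each statement's English description precedes it below -/
import Mathlib

section
/- Define f : (0,∞) → ℝ by f(x) = min{|1 - x|, |1 - 1/x|}. Then for positive reals x_1,...,x_m and nonnegative weights λ_1,...,λ_m summing to 1: f(∏_h x_h^{λ_h}) ≤ max{f(x_1),...,f(x_m)} (where the max is over a nonempty finite set, m ≥ 1). -/
/-!
On `(0, 1]` the function `f t = min |1 - t| |1 - 1/t|` equals `1 - t`, and on `[1, ∞)` it equals
`1 - 1/t`, because `t + 1/t ≥ 2`; so `f` is antitone on `(0, 1]` and monotone on `[1, ∞)`.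
The weighted geometric mean `P` lies between the smallest and the largest `x h`. If `P ≤ 1`, then
`min x ≤ P ≤ 1` and `f P ≤ f (min x)`; if `P ≥ 1`, then `1 ≤ P ≤ max x` and `f P ≤ f (max x)`.
-/

open Finset

namespace Real

variable {ι : Type*} {s : Finset ι} {w z : ι → ℝ}

theorem le_geom_mean_weighted {m : ℝ} (hw : ∀ i ∈ s, 0 ≤ w i) (hw' : ∑ i ∈ s, w i = 1)
    (hm₀ : 0 ≤ m) (hm : ∀ i ∈ s, m ≤ z i) : m ≤ ∏ i ∈ s, z i ^ w i :=
  calc m = ∏ i ∈ s, m ^ w i := by rw [← rpow_sum_of_nonneg hm₀ hw, hw', rpow_one]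
    _ ≤ ∏ i ∈ s, z i ^ w i :=
      prod_le_prod (fun i _ => by positivity)
        fun i hi => rpow_le_rpow hm₀ (hm i hi) (hw i hi)

theorem geom_mean_weighted_le {M : ℝ} (hw : ∀ i ∈ s, 0 ≤ w i) (hw' : ∑ i ∈ s, w i = 1)
    (hz : ∀ i ∈ s, 0 ≤ z i) (hM : ∀ i ∈ s, z i ≤ M) : ∏ i ∈ s, z i ^ w i ≤ M := by
  obtain ⟨j, hj⟩ := nonempty_of_sum_ne_zero (hw'.trans_ne one_ne_zero)
  have hM₀ : 0 ≤ M := (hz j hj).trans (hM j hj)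
  calc ∏ i ∈ s, z i ^ w i ≤ ∏ i ∈ s, M ^ w i :=
        prod_le_prod (fun i hi => rpow_nonneg (hz i hi) _)
          fun i hi => rpow_le_rpow (hz i hi) (hM i hi) (hw i hi)
    _ = M := by rw [← rpow_sum_of_nonneg hM₀ hw, hw', rpow_one]

end Real

/-- The local inconsistency of a triad in Koczkodaj's index. -/
noncomputable def triadInconsistency (t : ℝ) : ℝ := min |1 - t| |1 - 1 / t|

theorem triadInconsistency_of_le_one {t : ℝ} (h₀ : 0 < t) (h₁ : t ≤ 1) :
    triadInconsistency t = 1 - t := by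
  have hinv : 1 - t ≤ 1 / t - 1 := by
    rw [div_sub' h₀.ne', le_div_iff₀ h₀]
    nlinarith
  rw [triadInconsistency, abs_of_nonneg (sub_nonneg.2 h₁), abs_sub_comm,
    abs_of_nonneg (by linarith), min_eq_left hinv]

theorem triadInconsistency_of_one_le {t : ℝ} (h₁ : 1 ≤ t) :
    triadInconsistency t = 1 - 1 / t := by
  have h₀ : 0 < t := one_pos.trans_le h₁
  have hinv : 1 - 1 / t ≤ t - 1 := by
    rw [sub_div' h₀.ne', div_le_iff₀ h₀]
    nlinarith
  have hinv₁ : 1 / t ≤ 1 := (div_le_one h₀).2 h₁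
  rw [triadInconsistency, abs_sub_comm, abs_of_nonneg (sub_nonneg.2 h₁),
    abs_of_nonneg (sub_nonneg.2 hinv₁), min_eq_right hinv]

theorem triadInconsistency_antitoneOn : AntitoneOn triadInconsistency (Set.Ioc 0 1) := by
  intro s ⟨hs₀, hs₁⟩ t ⟨ht₀, ht₁⟩ hst
  rw [triadInconsistency_of_le_one hs₀ hs₁, triadInconsistency_of_le_one ht₀ ht₁]
  linarith

theorem triadInconsistency_monotoneOn : MonotoneOn triadInconsistency (Set.Ici 1) := by
  intro s (hs : 1 ≤ s) t (ht : 1 ≤ t) hst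
  rw [triadInconsistency_of_one_le hs, triadInconsistency_of_one_le ht]
  gcongr

theorem stmt_6_general (m : ℕ)
    (hne : (Finset.univ : Finset (Fin m)).Nonempty)
    (x : Fin m → ℝ) (hx : ∀ h, 0 < x h)
    (l : Fin m → ℝ) (hl : ∀ h, 0 ≤ l h) (hsum : ∑ h, l h = 1) :
    (fun t : ℝ => min |1 - t| |1 - 1 / t|) (∏ h, (x h) ^ (l h)) ≤
      Finset.univ.sup' hne (fun h => min |1 - x h| |1 - 1 / x h|) := by
  change triadInconsistency _ ≤ univ.sup' hne (fun h => triadInconsistency (x h))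
  set P := ∏ h, x h ^ l h
  have hP : 0 < P := prod_pos fun h _ => Real.rpow_pos_of_pos (hx h) _
  suffices ∃ j, triadInconsistency P ≤ triadInconsistency (x j) by
    obtain ⟨j, hj⟩ := this
    exact hj.trans (le_sup' (fun h => triadInconsistency (x h)) (mem_univ j))
  rcases le_total P 1 with hP₁ | hP₁
  · obtain ⟨j, -, hj⟩ := exists_min_image univ x hne
    have hjP : x j ≤ P :=
      Real.le_geom_mean_weighted (fun h _ => hl h) hsum (hx j).le fun h _ => hj h (mem_univ h)
    exact ⟨j, triadInconsistency_antitoneOn ⟨hx j, hjP.trans hP₁⟩ ⟨hP, hP₁⟩ hjP⟩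
  · obtain ⟨j, -, hj⟩ := exists_max_image univ x hne
    have hPj : P ≤ x j :=
      Real.geom_mean_weighted_le (fun h _ => hl h) hsum (fun h _ => (hx h).le)
        fun h _ => hj h (mem_univ h)
    exact ⟨j, triadInconsistency_monotoneOn hP₁ (hP₁.trans hPj) hPj⟩

theorem stmt_6 (m : ℕ) (hm : 0 < m)
    (hne : (Finset.univ : Finset (Fin m)).Nonempty)
    (x : Fin m → ℝ) (hx : ∀ h, 0 < x h)
    (l : Fin m → ℝ) (hl : ∀ h, 0 ≤ l h) (hsum : ∑ h, l h = 1) :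
    (fun t : ℝ => min |1 - t| |1 - 1 / t|) (∏ h, (x h) ^ (l h)) ≤
      Finset.univ.sup' hne (fun h => min |1 - x h| |1 - 1 / x h|) :=
  stmt_6_general m hne x hx l hl hsum
end

section
/- Define the index CI* of an n×n positive reciprocal matrix A (n ≥ 3) by CI*(A) = (1/C(n,3)) * ∑_{i<j<k} (a_ij a_jk / a_ik + a_ik / (a_ij a_jk) − 2). Then CI* is strongly upper bounded: for any positive reciprocal matrices A_1,...,A_m of order n and weights λ_h ≥ 0 with ∑ λ_h = 1, CI*(A*) ≤ ∑_h λ_h CI*(A_h), where A* is the entry-wise weighted geometric mean of the A_h. -/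
noncomputable def CIstar (n : ℕ) (A : Fin n → Fin n → ℝ) : ℝ :=
  (∑ i : Fin n, ∑ j : Fin n, ∑ k : Fin n,
    if i < j ∧ j < k then
      A i j * A j k / A i k + A i k / (A i j * A j k) - 2
    else 0) / (n.choose 3)

lemma key_jensen {m : ℕ} (t l : Fin m → ℝ) (ht : ∀ h, 0 < t h) (hl : ∀ h, 0 ≤ l h)
    (hsum : ∑ h, l h = 1) :
    (∏ h, t h ^ l h) + (∏ h, t h ^ l h)⁻¹ - 2 ≤ ∑ h, l h * (t h + (t h)⁻¹ - 2) := by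
  have hφ : ConvexOn ℝ Set.univ (fun x : ℝ => Real.exp x + Real.exp (-x)) := by
    refine convexOn_exp.add ?_
    refine ⟨convex_univ, fun x _ y _ a b ha hb hab => ?_⟩
    have := convexOn_exp.2 (Set.mem_univ (-x)) (Set.mem_univ (-y)) ha hb hab
    simpa [smul_eq_mul, mul_neg, neg_add, add_comm] using this
  have hprod : (∏ h, t h ^ l h) = Real.exp (∑ h, l h * Real.log (t h)) := by
    rw [Real.exp_sum]
    exact Finset.prod_congr rfl fun h _ => by
      rw [Real.rpow_def_of_pos (ht h), mul_comm]
  have hJ := hφ.map_sum_le (t := Finset.univ) (w := l) (p := fun h => Real.log (t h))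
      (fun h _ => hl h) hsum (fun h _ => Set.mem_univ _)
  simp only [smul_eq_mul] at hJ
  rw [hprod, ← Real.exp_neg]
  have hR : ∑ h, l h * (Real.exp (Real.log (t h)) + Real.exp (-Real.log (t h)))
      = ∑ h, l h * (t h + (t h)⁻¹ - 2) + 2 := by
    have : ∀ h : Fin m, l h * (Real.exp (Real.log (t h)) + Real.exp (-Real.log (t h)))
        = l h * (t h + (t h)⁻¹ - 2) + l h * 2 := by
      intro h
      rw [Real.exp_log (ht h), Real.exp_neg, Real.exp_log (ht h)]
      ring
    rw [Finset.sum_congr rfl fun h _ => this h, Finset.sum_add_distrib,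
      ← Finset.sum_mul, hsum, one_mul]
  linarith [hJ, hR.symm.le, hR.le]

theorem stmt_11 (n m : ℕ) (hn : 3 ≤ n) (A : Fin m → Fin n → Fin n → ℝ)
    (hpos : ∀ h i j, 0 < A h i j) (hrec : ∀ h i j, A h i j * A h j i = 1)
    (l : Fin m → ℝ) (hl : ∀ h, 0 ≤ l h) (hsum : ∑ h, l h = 1) :
    CIstar n (fun i j => ∏ h, (A h i j) ^ (l h)) ≤
      ∑ h, l h * CIstar n (A h) := by
  have hc : (0:ℝ) < (n.choose 3 : ℝ) := by
    exact_mod_cast Nat.choose_pos hn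
  simp only [CIstar]
  have hterm : ∀ i j k : Fin n,
      (if i < j ∧ j < k then
        (∏ h, A h i j ^ l h) * (∏ h, A h j k ^ l h) / (∏ h, A h i k ^ l h) +
          (∏ h, A h i k ^ l h) / ((∏ h, A h i j ^ l h) * (∏ h, A h j k ^ l h)) - 2
      else 0) ≤
      ∑ h, l h * (if i < j ∧ j < k then
        A h i j * A h j k / A h i k + A h i k / (A h i j * A h j k) - 2 else 0) := by
    intro i j k
    by_cases hcond : i < j ∧ j < k
    · simp only [if_pos hcond]
      set t : Fin m → ℝ := fun h => A h i j * A h j k / A h i k with ht_def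
      have ht : ∀ h, 0 < t h := fun h =>
        div_pos (mul_pos (hpos h i j) (hpos h j k)) (hpos h i k)
      have h1 : (∏ h, A h i j ^ l h) * (∏ h, A h j k ^ l h) / (∏ h, A h i k ^ l h)
          = ∏ h, t h ^ l h := by
        rw [← Finset.prod_mul_distrib, ← Finset.prod_div_distrib]
        refine Finset.prod_congr rfl fun h _ => ?_
        rw [ht_def]
        rw [Real.div_rpow (mul_pos (hpos h i j) (hpos h j k)).le (hpos h i k).le,
          Real.mul_rpow (hpos h i j).le (hpos h j k).le]
      have h2 : (∏ h, A h i k ^ l h) / ((∏ h, A h i j ^ l h) * (∏ h, A h j k ^ l h))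
          = (∏ h, t h ^ l h)⁻¹ := by
        rw [← h1, inv_div]
      rw [h1, h2]
      refine (key_jensen t l ht hl hsum).trans_eq ?_
      refine Finset.sum_congr rfl fun h _ => ?_
      rw [ht_def]
      rw [inv_div]
    · simp [hcond]
  have hnum : (∑ i : Fin n, ∑ j : Fin n, ∑ k : Fin n,
      if i < j ∧ j < k then
        (∏ h, A h i j ^ l h) * (∏ h, A h j k ^ l h) / (∏ h, A h i k ^ l h) +
          (∏ h, A h i k ^ l h) / ((∏ h, A h i j ^ l h) * (∏ h, A h j k ^ l h)) - 2
      else 0) ≤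
      ∑ h, l h * (∑ i : Fin n, ∑ j : Fin n, ∑ k : Fin n,
        if i < j ∧ j < k then
          A h i j * A h j k / A h i k + A h i k / (A h i j * A h j k) - 2 else 0) := by
    calc _ ≤ ∑ i : Fin n, ∑ j : Fin n, ∑ k : Fin n, ∑ h, l h *
          (if i < j ∧ j < k then
            A h i j * A h j k / A h i k + A h i k / (A h i j * A h j k) - 2 else 0) := by
          exact Finset.sum_le_sum fun i _ => Finset.sum_le_sum fun j _ =>
            Finset.sum_le_sum fun k _ => hterm i j k
      _ = ∑ i : Fin n, ∑ j : Fin n, ∑ h, ∑ k : Fin n, l h *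
          (if i < j ∧ j < k then
            A h i j * A h j k / A h i k + A h i k / (A h i j * A h j k) - 2 else 0) :=
          Finset.sum_congr rfl fun i _ => Finset.sum_congr rfl fun j _ => Finset.sum_comm
      _ = ∑ i : Fin n, ∑ h, ∑ j : Fin n, ∑ k : Fin n, l h *
          (if i < j ∧ j < k then
            A h i j * A h j k / A h i k + A h i k / (A h i j * A h j k) - 2 else 0) :=
          Finset.sum_congr rfl fun i _ => Finset.sum_comm
      _ = ∑ h, ∑ i : Fin n, ∑ j : Fin n, ∑ k : Fin n, l h *
          (if i < j ∧ j < k then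
            A h i j * A h j k / A h i k + A h i k / (A h i j * A h j k) - 2 else 0) :=
          Finset.sum_comm
      _ = _ := by
          refine Finset.sum_congr rfl fun h _ => ?_
          simp [Finset.mul_sum]
  calc _ ≤ (∑ h, l h * (∑ i : Fin n, ∑ j : Fin n, ∑ k : Fin n,
        if i < j ∧ j < k then
          A h i j * A h j k / A h i k + A h i k / (A h i j * A h j k) - 2 else 0)) /
        (n.choose 3 : ℝ) := by
        exact div_le_div_of_nonneg_right hnum hc.le |>.trans_eq rfl
    _ = _ := by
        rw [Finset.sum_div]
        exact Finset.sum_congr rfl fun h _ => (mul_div_assoc _ _ _)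
end

section
/- Define the index GCI'(A) = ∑_{i<j<k} (ln(a_ij a_jk a_ki))^2 for an n×n positive reciprocal matrix A (n ≥ 3). Then GCI' is strongly upper bounded: for any positive reciprocal matrices A_1,...,A_m and weights λ_h ≥ 0 with ∑ λ_h = 1, GCI'(A*) ≤ ∑_h λ_h GCI'(A_h), where A* is the entry-wise weighted geometric mean. -/
noncomputable def GCI' (n : ℕ) (A : Fin n → Fin n → ℝ) : ℝ :=
  ∑ i : Fin n, ∑ j : Fin n, ∑ k : Fin n,
    if i < j ∧ j < k then (Real.log (A i j * A j k * A k i)) ^ 2 else 0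

/-!
The log of a triad cycle `a_ij a_jk a_ki` of the weighted geometric mean is the weighted
arithmetic mean of the corresponding log-cycles of the `A_h`, since `log` turns products and
powers into sums and multiples. Each summand of `GCI'` is therefore the square of a weighted mean,
which by convexity of `x ↦ x ^ 2` (Jensen) is at most the weighted mean of the squares; summing
over the triads gives the bound.
-/

open Finset

noncomputable def logCycle {n : ℕ} (A : Fin n → Fin n → ℝ) (i j k : Fin n) : ℝ :=
  Real.log (A i j * A j k * A k i)

lemma GCI'_eq_sum_logCycle_sq (n : ℕ) (A : Fin n → Fin n → ℝ) :
    GCI' n A = ∑ i, ∑ j, ∑ k, if i < j ∧ j < k then logCycle A i j k ^ 2 else 0 :=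
  rfl

lemma Real.log_prod_rpow {ι : Type*} (s : Finset ι) (x w : ι → ℝ) (hx : ∀ h ∈ s, 0 < x h) :
    Real.log (∏ h ∈ s, x h ^ w h) = ∑ h ∈ s, w h * Real.log (x h) := by
  rw [Real.log_prod fun h hh => (Real.rpow_pos_of_pos (hx h hh) _).ne']
  exact sum_congr rfl fun h hh => Real.log_rpow (hx h hh) _

lemma logCycle_geomMean {ι : Type*} [Fintype ι] {n : ℕ} (A : ι → Fin n → Fin n → ℝ)
    (hpos : ∀ h i j, 0 < A h i j) (l : ι → ℝ) (i j k : Fin n) :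
    logCycle (fun i j => ∏ h, A h i j ^ l h) i j k = ∑ h, l h * logCycle (A h) i j k := by
  have hmean_pos : ∀ a b, 0 < ∏ h, A h a b ^ l h :=
    fun a b => prod_pos fun h _ => Real.rpow_pos_of_pos (hpos h a b) _
  simp only [logCycle]
  rw [Real.log_mul (mul_pos (hmean_pos i j) (hmean_pos j k)).ne' (hmean_pos k i).ne',
    Real.log_mul (hmean_pos i j).ne' (hmean_pos j k).ne']
  simp only [Real.log_prod_rpow _ _ _ fun h _ => hpos h _ _, ← sum_add_distrib, ← mul_add]
  refine sum_congr rfl fun h _ => ?_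
  rw [Real.log_mul (mul_pos (hpos h i j) (hpos h j k)).ne' (hpos h k i).ne',
    Real.log_mul (hpos h i j).ne' (hpos h j k).ne']

lemma sq_sum_mul_le_sum_mul_sq {ι : Type*} (s : Finset ι) (w x : ι → ℝ)
    (hw : ∀ h ∈ s, 0 ≤ w h) (hsum : ∑ h ∈ s, w h = 1) :
    (∑ h ∈ s, w h * x h) ^ 2 ≤ ∑ h ∈ s, w h * x h ^ 2 := by
  simpa only [smul_eq_mul] using
    (even_two.convexOn_pow (𝕜 := ℝ)).map_sum_le hw hsum fun h _ => Set.mem_univ (x h)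

lemma sum_mul_GCI' {ι : Type*} [Fintype ι] (n : ℕ) (A : ι → Fin n → Fin n → ℝ) (l : ι → ℝ) :
    ∑ h, l h * GCI' n (A h) =
      ∑ i, ∑ j, ∑ k, if i < j ∧ j < k then ∑ h, l h * logCycle (A h) i j k ^ 2 else 0 := by
  simp only [GCI'_eq_sum_logCycle_sq, mul_sum, mul_ite, mul_zero]
  rw [sum_comm]
  refine sum_congr rfl fun i _ => ?_
  rw [sum_comm]
  refine sum_congr rfl fun j _ => ?_
  rw [sum_comm]
  exact sum_congr rfl fun k _ => by split_ifs <;> simp only [sum_const_zero]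

theorem stmt_12_general (n m : ℕ) (A : Fin m → Fin n → Fin n → ℝ)
    (hpos : ∀ h i j, 0 < A h i j)
    (l : Fin m → ℝ) (hl : ∀ h, 0 ≤ l h) (hsum : ∑ h, l h = 1) :
    GCI' n (fun i j => ∏ h, (A h i j) ^ (l h)) ≤
      ∑ h, l h * GCI' n (A h) := by
  rw [GCI'_eq_sum_logCycle_sq, sum_mul_GCI']
  gcongr with i _ j _ k _
  split_ifs
  · rw [logCycle_geomMean A hpos]
    exact sq_sum_mul_le_sum_mul_sq _ _ _ (fun h _ => hl h) hsum
  · rfl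

theorem stmt_12 (n m : ℕ) (hn : 3 ≤ n) (A : Fin m → Fin n → Fin n → ℝ)
    (hpos : ∀ h i j, 0 < A h i j) (hrec : ∀ h i j, A h i j * A h j i = 1)
    (l : Fin m → ℝ) (hl : ∀ h, 0 ≤ l h) (hsum : ∑ h, l h = 1) :
    GCI' n (fun i j => ∏ h, (A h i j) ^ (l h)) ≤
      ∑ h, l h * GCI' n (A h) :=
  stmt_12_general n m A hpos l hl hsum
end

section
/- Define the Koczkodaj index K(A) = max over triples i<j<k of min{|1 − a_ij a_jk a_ki|, |1 − 1/(a_ij a_jk a_ki)|} for an n×n positive reciprocal matrix A (n ≥ 3). Then K is upper bounded: for any positive reciprocal matrices A_1,...,A_m and weights λ_h ≥ 0 summing to 1, K(A*) ≤ max{K(A_1),...,K(A_m)}, where A* is the entry-wise weighted geometric mean. -/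
noncomputable def Kocz (n : ℕ) (A : Fin n → Fin n → ℝ) : ℝ :=
  sSup {r : ℝ | ∃ i j k : Fin n, i < j ∧ j < k ∧
    r = min |1 - A i j * A j k * A k i| |1 - 1 / (A i j * A j k * A k i)|}

lemma one_le_one_div' {t : ℝ} (ht : 0 < t) (h : t ≤ 1) : 1 ≤ 1 / t :=
  (le_div_iff₀ ht).2 (by linarith)

lemma one_div_le_one' {t : ℝ} (ht : 0 < t) (h : 1 ≤ t) : 1 / t ≤ 1 :=
  (div_le_one ht).2 h

lemma f_eq {t : ℝ} (ht : 0 < t) :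
    min |1 - t| |1 - 1 / t| = 1 - min t (1 / t) := by
  have h3 : t * (1 / t) = 1 := mul_one_div_cancel ht.ne'
  rcases le_total t 1 with h | h
  · have h2 : 1 ≤ 1 / t := one_le_one_div' ht h
    rw [abs_of_nonneg (by linarith), abs_of_nonpos (by linarith),
      min_eq_left (by nlinarith [sq_nonneg (1 - t)] : (1:ℝ) - t ≤ -(1 - 1/t)),
      min_eq_left (by nlinarith [sq_nonneg (1 - t)] : t ≤ 1 / t)]
  · have h2 : 1 / t ≤ 1 := one_div_le_one' ht h
    rw [abs_of_nonpos (by linarith), abs_of_nonneg (by linarith),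
      min_eq_right (by nlinarith [sq_nonneg (1 - t)] : (1:ℝ) - 1/t ≤ -(1 - t)),
      min_eq_right (by nlinarith [sq_nonneg (1 - t)] : 1 / t ≤ t)]

lemma f_nonneg {t : ℝ} : 0 ≤ min |1 - t| |1 - 1 / t| := by positivity

lemma f_le_one {t : ℝ} (ht : 0 < t) : min |1 - t| |1 - 1 / t| ≤ 1 := by
  rw [f_eq ht]
  have h1 : 0 < min t (1 / t) := lt_min ht (by positivity)
  linarith

lemma Kocz_bddAbove (n : ℕ) (A : Fin n → Fin n → ℝ) (hpos : ∀ i j, 0 < A i j) :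
    BddAbove {r : ℝ | ∃ i j k : Fin n, i < j ∧ j < k ∧
      r = min |1 - A i j * A j k * A k i| |1 - 1 / (A i j * A j k * A k i)|} := by
  refine ⟨1, fun r ⟨i, j, k, _, _, hr⟩ => ?_⟩
  rw [hr]
  exact f_le_one (mul_pos (mul_pos (hpos i j) (hpos j k)) (hpos k i))

theorem stmt_13 (n m : ℕ) (hn : 3 ≤ n) (A : Fin m → Fin n → Fin n → ℝ)
    (hpos : ∀ h i j, 0 < A h i j) (hrec : ∀ h i j, A h i j * A h j i = 1)
    (hne : (Finset.univ : Finset (Fin m)).Nonempty)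
    (l : Fin m → ℝ) (hl : ∀ h, 0 ≤ l h) (hsum : ∑ h, l h = 1) :
    Kocz n (fun i j => ∏ h, (A h i j) ^ (l h)) ≤
      Finset.univ.sup' hne (fun h => Kocz n (A h)) := by
  set S := Finset.univ.sup' hne (fun h => Kocz n (A h)) with hS
  have hKnn : ∀ h, 0 ≤ Kocz n (A h) := by
    intro h
    have h01 : (⟨0, by omega⟩ : Fin n) < ⟨1, by omega⟩ := by simp [Fin.lt_def]
    have h12 : (⟨1, by omega⟩ : Fin n) < ⟨2, by omega⟩ := by simp [Fin.lt_def]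
    have hmem : min |1 - A h ⟨0, by omega⟩ ⟨1, by omega⟩ * A h ⟨1, by omega⟩ ⟨2, by omega⟩ *
          A h ⟨2, by omega⟩ ⟨0, by omega⟩|
        |1 - 1 / (A h ⟨0, by omega⟩ ⟨1, by omega⟩ * A h ⟨1, by omega⟩ ⟨2, by omega⟩ *
          A h ⟨2, by omega⟩ ⟨0, by omega⟩)| ∈
        {r : ℝ | ∃ i j k : Fin n, i < j ∧ j < k ∧
          r = min |1 - A h i j * A h j k * A h k i| |1 - 1 / (A h i j * A h j k * A h k i)|} :=
      ⟨_, _, _, h01, h12, rfl⟩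
    exact le_trans f_nonneg (le_csSup (Kocz_bddAbove n (A h) (hpos h)) hmem)
  have hSnn : 0 ≤ S :=
    le_trans (hKnn hne.choose)
      (Finset.le_sup' (fun h => Kocz n (A h)) (Finset.mem_univ hne.choose))
  refine Real.sSup_le ?_ hSnn
  rintro r ⟨i, j, k, hij, hjk, hr⟩
  set T : Fin m → ℝ := fun h => A h i j * A h j k * A h k i with hT
  have hTpos : ∀ h, 0 < T h := fun h =>
    mul_pos (mul_pos (hpos h i j) (hpos h j k)) (hpos h k i)
  have hprod : (∏ h, (A h i j) ^ (l h)) * (∏ h, (A h j k) ^ (l h)) * (∏ h, (A h k i) ^ (l h))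
      = ∏ h, (T h) ^ (l h) := by
    rw [← Finset.prod_mul_distrib, ← Finset.prod_mul_distrib]
    refine Finset.prod_congr rfl fun h _ => ?_
    rw [hT, ← Real.mul_rpow (hpos h i j).le (hpos h j k).le,
      ← Real.mul_rpow (mul_pos (hpos h i j) (hpos h j k)).le (hpos h k i).le]
  set t : ℝ := ∏ h, (T h) ^ (l h) with ht
  have htpos : 0 < t := Finset.prod_pos fun h _ => Real.rpow_pos_of_pos (hTpos h) _
  have hrt : r = min |1 - t| |1 - 1 / t| := by rw [hr]; rw [hprod]
  have hfS : ∀ h, 1 - min (T h) (1 / T h) ≤ S := by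
    intro h
    have hmem : min |1 - T h| |1 - 1 / T h| ∈
        {r : ℝ | ∃ i' j' k' : Fin n, i' < j' ∧ j' < k' ∧
          r = min |1 - A h i' j' * A h j' k' * A h k' i'|
            |1 - 1 / (A h i' j' * A h j' k' * A h k' i')|} :=
      ⟨i, j, k, hij, hjk, rfl⟩
    have h1 := le_csSup (Kocz_bddAbove n (A h) (hpos h)) hmem
    rw [f_eq (hTpos h)] at h1
    exact le_trans h1 (Finset.le_sup' (fun h => Kocz n (A h)) (Finset.mem_univ h))
  rw [hrt, f_eq htpos]
  rcases le_total t 1 with h1 | h1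
  · obtain ⟨h0, _, hh0⟩ := Finset.exists_mem_eq_inf' hne T
    have hinf : Finset.univ.inf' hne T ≤ t := by
      have hipos : 0 < Finset.univ.inf' hne T := by rw [hh0]; exact hTpos h0
      calc Finset.univ.inf' hne T = (Finset.univ.inf' hne T) ^ (∑ h, l h) := by
            rw [hsum, Real.rpow_one]
        _ = ∏ h, (Finset.univ.inf' hne T) ^ (l h) := Real.rpow_sum_of_pos hipos _ _
        _ ≤ t := Finset.prod_le_prod (fun h _ => (Real.rpow_pos_of_pos hipos _).le)
            (fun h _ => Real.rpow_le_rpow hipos.le (Finset.inf'_le _ (Finset.mem_univ h)) (hl h))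
    have hT0 : T h0 ≤ t := hh0 ▸ hinf
    have hT01 : T h0 ≤ 1 := le_trans hT0 h1
    have e1 : min (T h0) (1 / T h0) = T h0 :=
      min_eq_left (le_trans hT01 (one_le_one_div' (hTpos h0) hT01))
    have e2 : min t (1 / t) = t := min_eq_left (le_trans h1 (one_le_one_div' htpos h1))
    have := hfS h0
    rw [e1] at this
    rw [e2]
    linarith
  · obtain ⟨h0, _, hh0⟩ := Finset.exists_mem_eq_sup' hne T
    have hsup : t ≤ Finset.univ.sup' hne T := by
      have hspos : 0 < Finset.univ.sup' hne T := by rw [hh0]; exact hTpos h0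
      calc t ≤ ∏ h, (Finset.univ.sup' hne T) ^ (l h) :=
            Finset.prod_le_prod (fun h _ => (Real.rpow_pos_of_pos (hTpos h) _).le)
              (fun h _ => Real.rpow_le_rpow (hTpos h).le
                (Finset.le_sup' _ (Finset.mem_univ h)) (hl h))
        _ = (Finset.univ.sup' hne T) ^ (∑ h, l h) := (Real.rpow_sum_of_pos hspos _ _).symm
        _ = Finset.univ.sup' hne T := by rw [hsum, Real.rpow_one]
    have hT0 : t ≤ T h0 := hh0 ▸ hsup
    have hT01 : 1 ≤ T h0 := le_trans h1 hT0
    have e1 : min (T h0) (1 / T h0) = 1 / T h0 :=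
      min_eq_right (le_trans (one_div_le_one' (hTpos h0) hT01) hT01)
    have e2 : min t (1 / t) = 1 / t := min_eq_right (le_trans (one_div_le_one' htpos h1) h1)
    have hdiv : 1 / T h0 ≤ 1 / t := one_div_le_one_div_of_le htpos hT0
    have := hfS h0
    rw [e1] at this
    rw [e2]
    linarith
end

section
/- Define the index I_CD'(A) = ∏_{i<j<k} max{a_ij a_jk / a_ik, a_ik/(a_ij a_jk)} for an n×n positive reciprocal matrix A (n ≥ 3), that is, the Cavallo–D'Apuzzo index without the normalizing root. For any positive reciprocal matrices A_1, A_2 and λ ∈ [0,1], each triadic factor of the aggregate satisfies max{t*, 1/t*} ≤ λ max{t_1, 1/t_1} + (1−λ) max{t_2, 1/t_2}, where t_h = a_ij^(h) a_jk^(h) a_ki^(h) and t* = t_1^λ t_2^{1−λ}. -/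
lemma aux_key {t₁ t₂ lam : ℝ} (h1 : 0 < t₁) (h2 : 0 < t₂) (hl0 : 0 ≤ lam) (hl1 : lam ≤ 1) :
    max (t₁ ^ lam * t₂ ^ (1 - lam)) (1 / (t₁ ^ lam * t₂ ^ (1 - lam))) ≤
      lam * max t₁ (1 / t₁) + (1 - lam) * max t₂ (1 / t₂) := by
  have hl1' : 0 ≤ 1 - lam := by linarith
  have hsum : lam + (1 - lam) = 1 := by ring
  have g1 : t₁ ^ lam * t₂ ^ (1 - lam) ≤ lam * t₁ + (1 - lam) * t₂ :=
    Real.geom_mean_le_arith_mean2_weighted hl0 hl1' h1.le h2.le hsum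
  have g2 : (1 / t₁) ^ lam * (1 / t₂) ^ (1 - lam) ≤ lam * (1 / t₁) + (1 - lam) * (1 / t₂) :=
    Real.geom_mean_le_arith_mean2_weighted hl0 hl1' (by positivity) (by positivity) hsum
  have hinv : 1 / (t₁ ^ lam * t₂ ^ (1 - lam)) = (1 / t₁) ^ lam * (1 / t₂) ^ (1 - lam) := by
    rw [one_div, mul_inv, one_div, one_div, Real.inv_rpow h1.le, Real.inv_rpow h2.le]
  apply max_le
  · exact g1.trans (add_le_add (mul_le_mul_of_nonneg_left (le_max_left _ _) hl0)
      (mul_le_mul_of_nonneg_left (le_max_left _ _) hl1'))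
  · rw [hinv]
    exact g2.trans (add_le_add (mul_le_mul_of_nonneg_left (le_max_right _ _) hl0)
      (mul_le_mul_of_nonneg_left (le_max_right _ _) hl1'))

theorem stmt_14 (n : ℕ) (hn : 3 ≤ n) (A₁ A₂ : Fin n → Fin n → ℝ)
    (hpos₁ : ∀ i j, 0 < A₁ i j) (hrec₁ : ∀ i j, A₁ i j * A₁ j i = 1)
    (hpos₂ : ∀ i j, 0 < A₂ i j) (hrec₂ : ∀ i j, A₂ i j * A₂ j i = 1)
    (lam : ℝ) (hl0 : 0 ≤ lam) (hl1 : lam ≤ 1) :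
    ∀ i j k : Fin n, i < j → j < k →
      max ((A₁ i j * A₁ j k * A₁ k i) ^ lam * (A₂ i j * A₂ j k * A₂ k i) ^ (1 - lam))
          (1 / ((A₁ i j * A₁ j k * A₁ k i) ^ lam * (A₂ i j * A₂ j k * A₂ k i) ^ (1 - lam))) ≤
        lam * max (A₁ i j * A₁ j k * A₁ k i) (1 / (A₁ i j * A₁ j k * A₁ k i)) +
        (1 - lam) * max (A₂ i j * A₂ j k * A₂ k i) (1 / (A₂ i j * A₂ j k * A₂ k i)) := by
  intro i j k _ _
  exact aux_key (mul_pos (mul_pos (hpos₁ i j) (hpos₁ j k)) (hpos₁ k i))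
    (mul_pos (mul_pos (hpos₂ i j) (hpos₂ j k)) (hpos₂ k i)) hl0 hl1
end

section
/- Let I be a function on n×n positive reciprocal matrices. Suppose there exists a matrix A and reals b' < b < b'' such that I(A(b)) > I(A(b')) and I(A(b)) > I(A(b'')), where A(c) = (a_ij^c). Then I is not upper bounded with respect to geometric-mean aggregation: there exist matrices B_1, B_2 and λ ∈ [0,1] such that I of the entry-wise weighted geometric mean of B_1 and B_2 exceeds max{I(B_1), I(B_2)}. -/
theorem stmt_17 (n : ℕ) (I : (Fin n → Fin n → ℝ) → ℝ)
    (A : Fin n → Fin n → ℝ)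
    (hpos : ∀ i j, 0 < A i j) (hrec : ∀ i j, A i j * A j i = 1)
    (b' b b'' : ℝ) (h1 : b' < b) (h2 : b < b'')
    (hI1 : I (fun i j => A i j ^ b') < I (fun i j => A i j ^ b))
    (hI2 : I (fun i j => A i j ^ b'') < I (fun i j => A i j ^ b)) :
    ∃ B₁ B₂ : Fin n → Fin n → ℝ, ∃ lam : ℝ,
      (∀ i j, 0 < B₁ i j) ∧ (∀ i j, B₁ i j * B₁ j i = 1) ∧
      (∀ i j, 0 < B₂ i j) ∧ (∀ i j, B₂ i j * B₂ j i = 1) ∧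
      0 ≤ lam ∧ lam ≤ 1 ∧
      max (I B₁) (I B₂) < I (fun i j => (B₁ i j) ^ lam * (B₂ i j) ^ (1 - lam)) := by
  have hd : (0:ℝ) < b'' - b' := by linarith
  refine ⟨fun i j => A i j ^ b', fun i j => A i j ^ b'', (b'' - b) / (b'' - b'), ?_, ?_, ?_, ?_, ?_, ?_, ?_⟩
  · intro i j; exact Real.rpow_pos_of_pos (hpos i j) _
  · intro i j
    rw [← Real.mul_rpow (hpos i j).le (hpos j i).le, hrec i j, Real.one_rpow]
  · intro i j; exact Real.rpow_pos_of_pos (hpos i j) _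
  · intro i j
    rw [← Real.mul_rpow (hpos i j).le (hpos j i).le, hrec i j, Real.one_rpow]
  · exact div_nonneg (by linarith) hd.le
  · rw [div_le_one hd]; linarith
  · have hmix : (fun i j => (A i j ^ b') ^ ((b'' - b) / (b'' - b')) *
        (A i j ^ b'') ^ (1 - (b'' - b) / (b'' - b'))) = fun i j => A i j ^ b := by
      funext i j
      rw [← Real.rpow_mul (hpos i j).le, ← Real.rpow_mul (hpos i j).le,
        ← Real.rpow_add (hpos i j)]
      congr 1
      field_simp
      ring
    rw [hmix]
    exact max_lt hI1 hI2
end
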